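/- Fix (r₁, r₂) ∈ ℝ² and locations μ¹, μ² ∈ ℝ, suppose θ¹ and θ² are independent, and let μ̂ⁿ¹, μ̂ⁿ² be sequences of random variables such that √n(μ̂ⁿ¹ − μ¹) and √n(μ̂ⁿ² − μ²) are O_P(1). Define the centred population moments J_{jc}(r) := E[cos(r(θ^{(j)} − μ^{(j)}))] and J_{js}(r) := E[sin(r(θ^{(j)} − μ^{(j)}))] for j = 1,2. Then, as n → ∞, n^{−1/2} Σ_{i=1}^{n} { cos(r₁(θ¹ᵢ − μ̂ⁿ¹) + r₂(θ²ᵢ − μ̂ⁿ²)) − cos(r₁(θ¹ᵢ − μ¹) + r₂(θ²ᵢ − μ²)) } = ( r₁ √n(μ̂ⁿ¹ − μ¹) + r₂ √n(μ̂ⁿ² − μ²) ) ( J_{1s}(r₁)J_{2c}(r₂) + J_{1c}(r₁)J_{2s}(r₂) ) + o_P(1). -/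

import Mathlib

/-! Write `aᵢ = r₁(θ¹ᵢ - μ¹) + r₂(θ²ᵢ - μ²)` and `dₙ = r₁(μ̂ⁿ¹ - μ¹) + r₂(μ̂ⁿ² - μ²)`, so that the
estimated argument is `aᵢ - dₙ` and `Zₙ = √n dₙ` is `O_P(1)`. A first-order Taylor expansion gives
`cos (aᵢ - dₙ) - cos aᵢ = dₙ sin aᵢ + O(dₙ²)`, hence the normalised sum equals
`Zₙ · (n⁻¹ Σ sin aᵢ) + O(Zₙ² / √n)`. The remainder is `o_P(1)`, and by the law of large numbers
`n⁻¹ Σ sin aᵢ` converges to `E[sin a₁]`, which independence of `θ¹` and `θ²` splits, through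
`sin (x + y) = sin x cos y + cos x sin y`, into the product of moments in the statement. -/

open MeasureTheory ProbabilityTheory Filter Real
open scoped NNReal BigOperators Topology

/-- A sequence of random variables is bounded in probability (`O_P(1)`). -/
def BoundedInProbability {Ω : Type*} [MeasurableSpace Ω] (μ : Measure Ω)
    (X : ℕ → Ω → ℝ) : Prop :=
  ∀ ε : ℝ, 0 < ε → ∃ M : ℝ, 0 < M ∧ ∀ n : ℕ, μ {ω | M < |X n ω|} < ENNReal.ofReal ε

lemma abs_cos_sub_one_le (x : ℝ) : |cos x - 1| ≤ x ^ 2 / 2 := by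
  rw [abs_of_nonpos (sub_nonpos.2 (cos_le_one x))]
  linarith [one_sub_sq_div_two_le_cos (x := x)]

lemma abs_sin_sub_self_le (x : ℝ) : |sin x - x| ≤ x ^ 2 / 2 := by
  rw [abs_sub_comm]
  rcases le_or_gt |x| 3 with hx | hx
  · have hcube := abs_sub_sin_le x
    have : |x| ^ 3 / 6 ≤ x ^ 2 / 2 := by
      rw [← sq_abs x]; nlinarith [abs_nonneg x, sq_nonneg |x|]
    linarith
  · -- for large `|x|` the crude bound `|x| + 1` is already below `x² / 2`
    have hsin := abs_sin_le_one x
    calc |x - sin x| ≤ |x| + |sin x| := abs_sub _ _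
      _ ≤ x ^ 2 / 2 := by rw [← sq_abs x]; nlinarith

lemma abs_cos_sub_sub_cos_sub_mul_sin_le (a d : ℝ) :
    |cos (a - d) - cos a - d * sin a| ≤ d ^ 2 := by
  have hexpand : cos (a - d) - cos a - d * sin a = cos a * (cos d - 1) + sin a * (sin d - d) := by
    rw [cos_sub]; ring
  rw [hexpand]
  calc |cos a * (cos d - 1) + sin a * (sin d - d)|
      ≤ |cos a| * |cos d - 1| + |sin a| * |sin d - d| := by
        rw [← abs_mul, ← abs_mul]; exact abs_add_le _ _
    _ ≤ 1 * (d ^ 2 / 2) + 1 * (d ^ 2 / 2) := by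
        gcongr
        exacts [abs_cos_le_one a, abs_cos_sub_one_le d, abs_sin_le_one a, abs_sin_sub_self_le d]
    _ = d ^ 2 := by ring

section Expansion

variable (n : ℕ) (a : ℕ → ℝ) (d : ℝ)

lemma inv_sqrt_mul_sum_cos_sub_sub_eq (S : ℝ) :
    (√n)⁻¹ * ∑ i ∈ Finset.range n, (cos (a i - d) - cos (a i)) - √n * d * S =
      (√n)⁻¹ * ∑ i ∈ Finset.range n, (cos (a i - d) - cos (a i) - d * sin (a i))
        + √n * d * ((∑ i ∈ Finset.range n, sin (a i)) / n - S) := by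
  have hinv : (√n)⁻¹ = √n / n := by rw [sqrt_div_self', one_div]
  simp only [Finset.sum_sub_distrib, ← Finset.mul_sum]
  rw [hinv]
  ring

lemma abs_inv_sqrt_mul_sum_cos_sub_sub_le :
    |(√n)⁻¹ * ∑ i ∈ Finset.range n, (cos (a i - d) - cos (a i) - d * sin (a i))|
      ≤ (√n)⁻¹ * (√n * d) ^ 2 := by
  have hsum : |∑ i ∈ Finset.range n, (cos (a i - d) - cos (a i) - d * sin (a i))| ≤ n * d ^ 2 :=
    calc _ ≤ ∑ i ∈ Finset.range n, |cos (a i - d) - cos (a i) - d * sin (a i)| :=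
          Finset.abs_sum_le_sum_abs _ _
      _ ≤ ∑ _i ∈ Finset.range n, d ^ 2 :=
          Finset.sum_le_sum fun i _ => abs_cos_sub_sub_cos_sub_mul_sin_le (a i) d
      _ = n * d ^ 2 := by simp
  rw [abs_mul, abs_of_nonneg (inv_nonneg.2 (sqrt_nonneg _)), mul_pow,
    sq_sqrt (Nat.cast_nonneg n)]
  gcongr

end Expansion

section Probability

variable {Ω : Type*} [MeasurableSpace Ω] {μ : Measure Ω}

namespace ProbabilityTheory

lemma IndepFun.integral_sin_add [IsFiniteMeasure μ] {X Y : Ω → ℝ} (hXY : IndepFun X Y μ)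
    (hX : AEMeasurable X μ) (hY : AEMeasurable Y μ) :
    ∫ ω, sin (X ω + Y ω) ∂μ =
      (∫ ω, sin (X ω) ∂μ) * (∫ ω, cos (Y ω) ∂μ) + (∫ ω, cos (X ω) ∂μ) * (∫ ω, sin (Y ω) ∂μ) := by
  have hsc : IndepFun (fun ω => sin (X ω)) (fun ω => cos (Y ω)) μ :=
    hXY.comp measurable_sin measurable_cos
  have hcs : IndepFun (fun ω => cos (X ω)) (fun ω => sin (Y ω)) μ :=
    hXY.comp measurable_cos measurable_sin
  have hbdd : ∀ f g : ℝ → ℝ, Measurable f → Measurable g → (∀ x, |f x| ≤ 1) → (∀ x, |g x| ≤ 1) →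
      Integrable (fun ω => f (X ω) * g (Y ω)) μ := fun f g hf hg hf1 hg1 =>
    Integrable.of_bound
      ((hf.comp_aemeasurable hX).mul (hg.comp_aemeasurable hY)).aestronglyMeasurable 1
      (ae_of_all _ fun ω => by rw [norm_mul]; exact mul_le_one₀ (hf1 _) (norm_nonneg _) (hg1 _))
  simp_rw [sin_add]
  rw [integral_add (hbdd _ _ measurable_sin measurable_cos abs_sin_le_one abs_cos_le_one)
      (hbdd _ _ measurable_cos measurable_sin abs_cos_le_one abs_sin_le_one),
    hsc.integral_fun_mul_eq_mul_integral (measurable_sin.comp_aemeasurable hX).aestronglyMeasurable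
      (measurable_cos.comp_aemeasurable hY).aestronglyMeasurable,
    hcs.integral_fun_mul_eq_mul_integral (measurable_cos.comp_aemeasurable hX).aestronglyMeasurable
      (measurable_sin.comp_aemeasurable hY).aestronglyMeasurable]

theorem tendstoInMeasure_average_comp_of_iIndepFun [IsFiniteMeasure μ] {β : Type*}
    [MeasurableSpace β] {X : ℕ → Ω → β} {Y : Ω → β} (hindep : iIndepFun X μ)
    (hident : ∀ i, IdentDistrib (X i) Y μ μ) {g : β → ℝ} (hg : Measurable g)
    (hint : Integrable (fun ω => g (Y ω)) μ) :
    TendstoInMeasure μ (fun (n : ℕ) ω => (∑ i ∈ Finset.range n, g (X i ω)) / n) atTop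
      (fun _ => ∫ ω, g (Y ω) ∂μ) := by
  have hident0 : IdentDistrib (fun ω => g (X 0 ω)) (fun ω => g (Y ω)) μ μ := (hident 0).comp hg
  have hslln := strong_law_ae_real (fun i ω => g (X i ω)) (hident0.integrable_iff.2 hint)
    (fun i j hij => (hindep.comp (fun _ => g) (fun _ => hg)).indepFun hij)
    (fun i => ((hident i).trans (hident 0).symm).comp hg)
  refine tendstoInMeasure_of_tendsto_ae (fun n => ?_) ?_
  · exact (Finset.aemeasurable_fun_sum _ fun i _ =>
      hg.comp_aemeasurable (hident i).aemeasurable_fst).div_const _ |>.aestronglyMeasurable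
  · filter_upwards [hslln] with ω hω
    rwa [hident0.integral_eq] at hω

end ProbabilityTheory

namespace MeasureTheory

variable {ι E : Type*} {l : Filter ι} [SeminormedAddCommGroup E]

lemma TendstoInMeasure.add {f g : ι → Ω → E} {F G : Ω → E} (hf : TendstoInMeasure μ f l F)
    (hg : TendstoInMeasure μ g l G) :
    TendstoInMeasure μ (fun i ω => f i ω + g i ω) l (fun ω => F ω + G ω) := by
  rw [tendstoInMeasure_iff_norm] at hf hg ⊢
  intro ε hε
  have hsplit : ∀ i, {ω | ε ≤ ‖f i ω + g i ω - (F ω + G ω)‖}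
      ⊆ {ω | ε / 2 ≤ ‖f i ω - F ω‖} ∪ {ω | ε / 2 ≤ ‖g i ω - G ω‖} := by
    intro i ω hω
    by_contra! h
    simp only [Set.mem_union, Set.mem_ofPred_eq, not_or, not_le] at h hω
    have := norm_add_le (f i ω - F ω) (g i ω - G ω)
    rw [add_sub_add_comm] at hω
    linarith
  refine tendsto_of_tendsto_of_tendsto_of_le_of_le tendsto_const_nhds
    (by simpa using (hf _ (half_pos hε)).add (hg _ (half_pos hε))) (fun _ => zero_le)
    fun i => (measure_mono (hsplit i)).trans (measure_union_le _ _)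

lemma TendstoInMeasure.of_norm_le {f g : ι → Ω → E} (hg : TendstoInMeasure μ g l 0)
    (hfg : ∀ i ω, ‖f i ω‖ ≤ ‖g i ω‖) : TendstoInMeasure μ f l 0 := by
  rw [tendstoInMeasure_iff_norm] at hg ⊢
  intro ε hε
  refine tendsto_of_tendsto_of_tendsto_of_le_of_le tendsto_const_nhds (hg ε hε)
    (fun _ => zero_le) fun i => measure_mono fun ω hω => ?_
  simp only [Set.mem_ofPred_eq, Pi.zero_apply, sub_zero] at hω ⊢
  exact hω.trans (hfg i ω)

lemma tendstoInMeasure_sub_iff {f : ι → Ω → E} {F : Ω → E} :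
    TendstoInMeasure μ (fun i ω => f i ω - F ω) l 0 ↔ TendstoInMeasure μ f l F := by
  simp only [tendstoInMeasure_iff_norm, Pi.zero_apply, sub_zero]

lemma tendstoInMeasure_const_of_tendsto {c : ι → E} (hc : Tendsto c l (𝓝 0)) :
    TendstoInMeasure μ (fun i (_ : Ω) => c i) l 0 := by
  rw [tendstoInMeasure_iff_norm]
  intro ε hε
  refine tendsto_const_nhds.congr' ?_
  filter_upwards [(tendsto_zero_iff_norm_tendsto_zero.1 hc).eventually (gt_mem_nhds hε)]
    with i hi
  simp [hi.not_ge]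

end MeasureTheory

namespace BoundedInProbability

variable {Z Z' : ℕ → Ω → ℝ}

lemma exists_measure_le (hZ : BoundedInProbability μ Z) {η : ENNReal} (hη : 0 < η) :
    ∃ M : ℝ, 0 < M ∧ ∀ n, μ {ω | M < |Z n ω|} ≤ η := by
  obtain ⟨δ, -, hδ, hδη⟩ := ENNReal.lt_iff_exists_real_btwn.1 hη
  obtain ⟨M, hM, hZM⟩ := hZ δ (ENNReal.ofReal_pos.1 hδ)
  exact ⟨M, hM, fun n => ((hZM n).trans hδη).le⟩

lemma const_mul (hZ : BoundedInProbability μ Z) (c : ℝ) :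
    BoundedInProbability μ (fun n ω => c * Z n ω) := by
  intro ε hε
  obtain ⟨M, hM, hZM⟩ := hZ ε hε
  refine ⟨(|c| + 1) * M, by positivity, fun n => lt_of_le_of_lt (measure_mono ?_) (hZM n)⟩
  intro ω hω
  by_contra! h
  simp only [Set.mem_ofPred_eq, not_lt, abs_mul] at h hω
  nlinarith [abs_nonneg c]

lemma add (hZ : BoundedInProbability μ Z) (hZ' : BoundedInProbability μ Z') :
    BoundedInProbability μ (fun n ω => Z n ω + Z' n ω) := by
  intro ε hε
  obtain ⟨M, hM, hZM⟩ := hZ (ε / 2) (half_pos hε)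
  obtain ⟨M', hM', hZM'⟩ := hZ' (ε / 2) (half_pos hε)
  refine ⟨M + M', by positivity, fun n => ?_⟩
  have hsplit : {ω | M + M' < |Z n ω + Z' n ω|} ⊆ {ω | M < |Z n ω|} ∪ {ω | M' < |Z' n ω|} := by
    intro ω hω
    by_contra! h
    simp only [Set.mem_union, Set.mem_ofPred_eq, not_or, not_lt] at h hω
    linarith [abs_add_le (Z n ω) (Z' n ω)]
  calc μ {ω | M + M' < |Z n ω + Z' n ω|}
      ≤ μ {ω | M < |Z n ω|} + μ {ω | M' < |Z' n ω|} :=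
        (measure_mono hsplit).trans (measure_union_le _ _)
    _ < ENNReal.ofReal (ε / 2) + ENNReal.ofReal (ε / 2) := ENNReal.add_lt_add (hZM n) (hZM' n)
    _ = ENNReal.ofReal ε := by rw [← ENNReal.ofReal_add (by positivity) (by positivity), add_halves]

lemma mul_tendstoInMeasure {l : Filter ℕ} (hZ : BoundedInProbability μ Z) {W : ℕ → Ω → ℝ}
    (hW : TendstoInMeasure μ W l 0) : TendstoInMeasure μ (fun n ω => Z n ω * W n ω) l 0 := by
  simp only [tendstoInMeasure_iff_norm, Pi.zero_apply, sub_zero] at hW ⊢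
  intro ε hε
  rw [ENNReal.tendsto_nhds_zero]
  intro η hη
  obtain ⟨M, hM, hZM⟩ := hZ.exists_measure_le (ENNReal.half_pos hη.ne')
  filter_upwards [ENNReal.tendsto_nhds_zero.1 (hW (ε / M) (by positivity)) _
    (ENNReal.half_pos hη.ne')] with n hn
  have hsplit : {ω | ε ≤ ‖Z n ω * W n ω‖}
      ⊆ {ω | M < |Z n ω|} ∪ {ω | ε / M ≤ ‖W n ω‖} := by
    intro ω hω
    by_contra! h
    simp only [Set.mem_union, Set.mem_ofPred_eq, not_or, not_lt, not_le, norm_mul,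
      Real.norm_eq_abs] at h hω
    have : |Z n ω| * |W n ω| < ε := by
      calc |Z n ω| * |W n ω| ≤ M * |W n ω| := by gcongr; exact h.1
        _ < M * (ε / M) := by gcongr; exact h.2
        _ = ε := mul_div_cancel₀ ε hM.ne'
    linarith
  calc μ {ω | ε ≤ ‖Z n ω * W n ω‖}
      ≤ μ {ω | M < |Z n ω|} + μ {ω | ε / M ≤ ‖W n ω‖} :=
        (measure_mono hsplit).trans (measure_union_le _ _)
    _ ≤ η / 2 + η / 2 := add_le_add (hZM n) hn
    _ = η := ENNReal.add_halves η

lemma tendstoInMeasure_of_abs_le_mul_sq {l : Filter ℕ} (hZ : BoundedInProbability μ Z)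
    {c : ℕ → ℝ} (hc : Tendsto c l (𝓝 0)) {R : ℕ → Ω → ℝ}
    (hR : ∀ n ω, |R n ω| ≤ c n * Z n ω ^ 2) : TendstoInMeasure μ R l 0 := by
  have hcZ := hZ.mul_tendstoInMeasure (tendstoInMeasure_const_of_tendsto (μ := μ) hc)
  refine (hZ.mul_tendstoInMeasure hcZ).of_norm_le fun n ω => ?_
  simp only [Real.norm_eq_abs]
  exact (hR n ω).trans (le_of_eq_of_le (by ring) (le_abs_self _))

end BoundedInProbability

end Probability

theorem centred_empirical_joint_cosine_expansion_general
    {Ω : Type*} [MeasurableSpace Ω] (μ : Measure Ω) [IsProbabilityMeasure μ]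
    (θ1 θ2 : Ω → ℝ)
    (hindep : IndepFun θ1 θ2 μ)
    (Θ : ℕ → Ω → ℝ × ℝ)
    (hiid : iIndepFun Θ μ)
    (hident : ∀ i, IdentDistrib (Θ i) (fun ω => (θ1 ω, θ2 ω)) μ μ)
    (r1 r2 : ℝ) (μ1 μ2 : ℝ)
    (μhat1 μhat2 : ℕ → Ω → ℝ)
    (hμhat1 : BoundedInProbability μ (fun n ω => Real.sqrt n * (μhat1 n ω - μ1)))
    (hμhat2 : BoundedInProbability μ (fun n ω => Real.sqrt n * (μhat2 n ω - μ2))) :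
    TendstoInMeasure μ
      (fun (n : ℕ) ω =>
        (Real.sqrt n)⁻¹ * ∑ i ∈ Finset.range n,
            (Real.cos (r1 * ((Θ i ω).1 - μhat1 n ω) + r2 * ((Θ i ω).2 - μhat2 n ω))
              - Real.cos (r1 * ((Θ i ω).1 - μ1) + r2 * ((Θ i ω).2 - μ2)))
          - (r1 * (Real.sqrt n * (μhat1 n ω - μ1))
                + r2 * (Real.sqrt n * (μhat2 n ω - μ2)))
              * ((∫ ω', Real.sin (r1 * (θ1 ω' - μ1)) ∂μ)
                    * (∫ ω', Real.cos (r2 * (θ2 ω' - μ2)) ∂μ)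
                  + (∫ ω', Real.cos (r1 * (θ1 ω' - μ1)) ∂μ)
                    * (∫ ω', Real.sin (r2 * (θ2 ω' - μ2)) ∂μ)))
      atTop (fun _ => (0 : ℝ)) := by
  set S := (∫ ω', sin (r1 * (θ1 ω' - μ1)) ∂μ) * (∫ ω', cos (r2 * (θ2 ω' - μ2)) ∂μ)
    + (∫ ω', cos (r1 * (θ1 ω' - μ1)) ∂μ) * (∫ ω', sin (r2 * (θ2 ω' - μ2)) ∂μ)
  set a : ℝ × ℝ → ℝ := fun p => r1 * (p.1 - μ1) + r2 * (p.2 - μ2) with ha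
  set d : ℕ → Ω → ℝ := fun n ω => r1 * (μhat1 n ω - μ1) + r2 * (μhat2 n ω - μ2) with hd
  have hθ1 : AEMeasurable θ1 μ := (hident 0).aemeasurable_snd.fst
  have hθ2 : AEMeasurable θ2 μ := (hident 0).aemeasurable_snd.snd
  have hmoment : ∫ ω, sin (a (θ1 ω, θ2 ω)) ∂μ = S :=
    (hindep.comp (φ := fun x => r1 * (x - μ1)) (ψ := fun y => r2 * (y - μ2)) (by fun_prop)
      (by fun_prop)).integral_sin_add (by fun_prop) (by fun_prop)
  have hmean := tendstoInMeasure_average_comp_of_iIndepFun hiid hident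
    (measurable_sin.comp (by fun_prop : Measurable a))
    (Integrable.of_bound (by fun_prop) 1 (ae_of_all _ fun ω => abs_sin_le_one _))
  have hZ : BoundedInProbability μ (fun n ω => √n * d n ω) := by
    convert (hμhat1.const_mul r1).add (hμhat2.const_mul r2) using 3 with n ω
    ring
  have hremainder := hZ.tendstoInMeasure_of_abs_le_mul_sq
    (tendsto_inv_atTop_zero.comp (tendsto_sqrt_atTop.comp tendsto_natCast_atTop_atTop))
    fun n ω => abs_inv_sqrt_mul_sum_cos_sub_sub_le n (fun i => a (Θ i ω)) (d n ω)
  have hlinear := hZ.mul_tendstoInMeasure (tendstoInMeasure_sub_iff.2 hmean)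
  refine (hremainder.add hlinear).congr (fun n => ae_of_all _ fun ω => ?_)
    (ae_of_all _ fun _ => add_zero 0)
  have harg : ∀ i, r1 * ((Θ i ω).1 - μhat1 n ω) + r2 * ((Θ i ω).2 - μhat2 n ω)
      = a (Θ i ω) - d n ω := fun i => by simp only [ha, hd]; ring
  have hZd : r1 * (√n * (μhat1 n ω - μ1)) + r2 * (√n * (μhat2 n ω - μ2)) = √n * d n ω := by
    simp only [hd]; ring
  simp only [harg, hZd, Function.comp_apply, hmoment]
  exact (inv_sqrt_mul_sum_cos_sub_sub_eq n (fun i => a (Θ i ω)) (d n ω) S).symm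

/-- Lemma 3: asymptotic expansion of the normalized sum of differences of cosines of the
estimator-centred sample around the `μ`-centred sample, under independence. -/
theorem centred_empirical_joint_cosine_expansion
    {Ω : Type*} [MeasurableSpace Ω] (μ : Measure Ω) [IsProbabilityMeasure μ]
    (θ1 θ2 : Ω → ℝ) (hθ1 : Measurable θ1) (hθ2 : Measurable θ2)
    (hindep : IndepFun θ1 θ2 μ)
    (Θ : ℕ → Ω → ℝ × ℝ) (hΘmeas : ∀ i, Measurable (Θ i))
    (hiid : iIndepFun Θ μ)
    (hident : ∀ i, IdentDistrib (Θ i) (fun ω => (θ1 ω, θ2 ω)) μ μ)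
    (r1 r2 : ℝ) (μ1 μ2 : ℝ)
    (μhat1 μhat2 : ℕ → Ω → ℝ)
    (hμhat1meas : ∀ n, Measurable (μhat1 n)) (hμhat2meas : ∀ n, Measurable (μhat2 n))
    (hμhat1 : BoundedInProbability μ (fun n ω => Real.sqrt n * (μhat1 n ω - μ1)))
    (hμhat2 : BoundedInProbability μ (fun n ω => Real.sqrt n * (μhat2 n ω - μ2))) :
    TendstoInMeasure μ
      (fun (n : ℕ) ω =>
        (Real.sqrt n)⁻¹ * ∑ i ∈ Finset.range n,
            (Real.cos (r1 * ((Θ i ω).1 - μhat1 n ω) + r2 * ((Θ i ω).2 - μhat2 n ω))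
              - Real.cos (r1 * ((Θ i ω).1 - μ1) + r2 * ((Θ i ω).2 - μ2)))
          - (r1 * (Real.sqrt n * (μhat1 n ω - μ1))
                + r2 * (Real.sqrt n * (μhat2 n ω - μ2)))
              * ((∫ ω', Real.sin (r1 * (θ1 ω' - μ1)) ∂μ)
                    * (∫ ω', Real.cos (r2 * (θ2 ω' - μ2)) ∂μ)
                  + (∫ ω', Real.cos (r1 * (θ1 ω' - μ1)) ∂μ)
                    * (∫ ω', Real.sin (r2 * (θ2 ω' - μ2)) ∂μ)))
      atTop (fun _ => (0 : ℝ)) :=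
  centred_empirical_joint_cosine_expansion_general μ θ1 θ2 hindep Θ hiid hident r1 r2 μ1 μ2 μhat1
    μhat2 hμhat1 hμhat2
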